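/- Let q be a prime power, t ≥ 2, and let h(x) ∈ F_q[x] be a monic polynomial of degree n that is a product of r pairwise distinct monic irreducible polynomials of equal degree m = n/r. Let R = F_q[x]/⟨h(x)⟩ and let d be a positive integer. If (q^m − 1)^{(t−1)(r−1)} · #{ v ∈ F_q^{tn} : 0 < wt(v) < d } < (q^m − 1)^{(t−1)r}, where wt denotes Hamming weight and F_q^{tn} is identified with R^t via coefficients, then there exists a tuple (a_1, …, a_{t−1}) of units of R such that every nonzero codeword of the one-generator quasi-polycyclic t-CIS code C_a generated by (1, a_1, …, a_{t−1}) has Hamming weight at least d. -/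

import Mathlib

open Polynomial

/-- The Hamming weight of an element of `R^t`, `R = F_q[x]/⟨h⟩` with `h` monic,
under the identification of `R` with `F_q^n` via the coefficients of the
canonical representative of degree `< n`. -/
noncomputable def qpcWeight {F : Type*} [CommRing F] {h : Polynomial F}
    (hmon : h.Monic) {t : ℕ} (c : Fin t → AdjoinRoot h) : ℕ :=
  ∑ i, (AdjoinRoot.modByMonicHom hmon (c i)).support.card

/-!
Expurgation. If `a i₀ = 1`, a nonzero `b` lies in the code generated by `a` only when
`b = b i₀ • a`, i.e. `b i₀ * a i = b i` for all `i`, with `b i₀ ≠ 0`. By the Chinese remainder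
theorem `R ≅ ∏ F_q[x]/⟨f_j⟩` is a product of `r` fields with `q^m` elements; a coordinate where
`b i₀` is nonzero determines that coordinate of a unit solution `a i`, so each equation has at
most `(q^m - 1)^(r-1)` unit solutions. Hence every low-weight `b` lies in at most
`(q^m - 1)^((t-1)(r-1))` of the `(q^m - 1)^((t-1)r)` codes, and the hypothesis leaves a code
containing none of them.
-/

open Finset Function

theorem exists_forall_not_of_card_mul_lt {α β : Type*} [Finite α] [Finite β] {P : α → β → Prop}
    {B : ℕ} (hB : ∀ b, Nat.card {a // P a b} ≤ B) (hlt : Nat.card β * B < Nat.card α) :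
    ∃ a, ∀ b, ¬ P a b := by
  classical
  have := Fintype.ofFinite α
  have := Fintype.ofFinite β
  by_contra! hcover
  choose g hg using hcover
  have hfiber : ∀ b ∈ univ.image g, #{a | g a = b} ≤ B := fun b _ =>
    calc #{a | g a = b} = Nat.card {a // g a = b} := by
          rw [Nat.card_eq_fintype_card, Fintype.card_subtype]
      _ ≤ Nat.card {a // P a b} :=
          Nat.card_mono (Set.toFinite _) fun a (ha : g a = b) => ha ▸ hg a
      _ ≤ B := hB b
  have hα := card_le_mul_card_image univ B hfiber
  have hβ := card_le_univ (univ.image g)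
  rw [card_univ, ← Nat.card_eq_fintype_card] at hα
  rw [← Nat.card_eq_fintype_card] at hβ
  exact (hα.trans (Nat.mul_le_mul_left B hβ)).not_gt (by rwa [mul_comm])

theorem Nat.card_subtype_ne {α : Type*} [Finite α] (a : α) :
    Nat.card {x // x ≠ a} = Nat.card α - 1 := by
  classical
  have := Fintype.ofFinite α
  rw [Nat.card_eq_fintype_card, Nat.card_eq_fintype_card]
  exact Set.card_ne_eq a

section UnitTuples

variable (R : Type*) [Monoid R] {ι : Type*} (i₀ : ι)

/-- The generators `(1, a_1, …, a_{t-1})` of the `t`-CIS codes, with the coordinate `i₀` in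
the role of the first one. -/
def unitTuples : Set (ι → R) := {a | a i₀ = 1 ∧ ∀ i, i ≠ i₀ → IsUnit (a i)}

variable {R i₀}

noncomputable def unitTuplesEquiv [DecidableEq ι] : unitTuples R i₀ ≃ ({i // i ≠ i₀} → Rˣ) where
  toFun a i := (a.2.2 i i.2).unit
  invFun g := ⟨fun i => if hi : i = i₀ then 1 else g ⟨i, hi⟩, by simp,
    fun i hi => by simp [hi]⟩
  left_inv a := by
    ext i
    by_cases hi : i = i₀
    · subst hi; simp [a.2.1]
    · simp [hi]
  right_inv g := by
    ext i
    simp [i.2]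

theorem card_unitTuples [Finite ι] :
    Nat.card (unitTuples R i₀) = Nat.card Rˣ ^ (Nat.card ι - 1) := by
  classical
  rw [Nat.card_congr unitTuplesEquiv, Nat.card_fun, Nat.card_subtype_ne]

end UnitTuples

theorem eq_apply_smul_of_mem_span_singleton {R ι : Type*} [CommSemiring R] {a b : ι → R}
    {i₀ : ι} (ha : a i₀ = 1) (hb : b ∈ Submodule.span R {a}) : b = b i₀ • a := by
  obtain ⟨s, rfl⟩ := Submodule.mem_span_singleton.mp hb
  simp [ha]

theorem card_unitTuples_mem_span_le {R ι : Type*} [CommSemiring R] [Finite R] [Finite ι]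
    {i₀ : ι} {B : ℕ}
    (hB : ∀ x y : R, x ≠ 0 → Nat.card {u : Rˣ // x * u = y} ≤ B) {b : ι → R} (hb : b ≠ 0) :
    Nat.card {a : unitTuples R i₀ // b ∈ Submodule.span R {a.1}} ≤ B ^ (Nat.card ι - 1) := by
  classical
  have := Fintype.ofFinite ι
  by_cases hb0 : b i₀ = 0
  · have : IsEmpty {a : unitTuples R i₀ // b ∈ Submodule.span R {a.1}} :=
      ⟨fun a => hb (by rw [eq_apply_smul_of_mem_span_singleton a.1.2.1 a.2, hb0, zero_smul])⟩
    simp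
  have hsol (a : {a : unitTuples R i₀ // b ∈ Submodule.span R {a.1}}) (i : {i // i ≠ i₀}) :
      b i₀ * unitTuplesEquiv a.1 i = b i := by
    conv_rhs => rw [eq_apply_smul_of_mem_span_singleton a.1.2.1 a.2]
    simp [unitTuplesEquiv]
  calc Nat.card {a : unitTuples R i₀ // b ∈ Submodule.span R {a.1}}
      ≤ Nat.card ((i : {i // i ≠ i₀}) → {u : Rˣ // b i₀ * u = b i}) :=
        Nat.card_le_card_of_injective (fun a i => ⟨unitTuplesEquiv a.1 i, hsol a i⟩)
          fun a a' h => Subtype.ext <| unitTuplesEquiv.injective <| funext fun i =>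
            congrArg Subtype.val (congrFun h i)
    _ = ∏ i : {i // i ≠ i₀}, Nat.card {u : Rˣ // b i₀ * u = b i} := Nat.card_pi
    _ ≤ B ^ (Nat.card ι - 1) := by
        rw [← Nat.card_subtype_ne i₀, Nat.card_eq_fintype_card, ← card_univ]
        exact prod_le_pow_card _ _ _ fun i _ => hB _ _ hb0

theorem exists_mem_unitTuples_forall_mem_span_notMem {R ι : Type*} [CommSemiring R] [Finite R]
    [Finite ι] (i₀ : ι) {S : Set (ι → R)} (hS : 0 ∉ S) {B : ℕ}
    (hB : ∀ x y : R, x ≠ 0 → Nat.card {u : Rˣ // x * u = y} ≤ B)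
    (hlt : B ^ (Nat.card ι - 1) * Nat.card S < Nat.card Rˣ ^ (Nat.card ι - 1)) :
    ∃ a ∈ unitTuples R i₀, ∀ c ∈ Submodule.span R {a}, c ∉ S := by
  obtain ⟨a, ha⟩ := exists_forall_not_of_card_mul_lt (α := unitTuples R i₀) (β := S)
    (P := fun a c => c.1 ∈ Submodule.span R {a.1})
    (fun c => card_unitTuples_mem_span_le hB (ne_of_mem_of_not_mem c.2 hS))
    (by rwa [card_unitTuples, mul_comm])
  exact ⟨a, a.2, fun c hc hcS => ha ⟨c, hcS⟩ hc⟩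

section RingEquivPi

variable {R ι : Type*} [Semiring R] [Fintype ι] {K : ι → Type*} [∀ i, Field (K i)] {k : ℕ}

theorem card_units_of_ringEquiv_pi (e : R ≃+* ∀ i, K i) (hk : ∀ i, Nat.card (K i) = k) :
    Nat.card Rˣ = (k - 1) ^ Fintype.card ι := by
  rw [Nat.card_congr ((Units.mapEquiv e.toMulEquiv).trans MulEquiv.piUnits).toEquiv, Nat.card_pi]
  simp [Nat.card_units, hk]

theorem card_units_mul_eq_le_of_ringEquiv_pi [∀ i, Finite (K i)] (e : R ≃+* ∀ i, K i)
    (hk : ∀ i, Nat.card (K i) = k) {x : R} (hx : x ≠ 0) (y : R) :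
    Nat.card {u : Rˣ // x * u = y} ≤ (k - 1) ^ (Fintype.card ι - 1) := by
  classical
  obtain ⟨j, hj⟩ : ∃ j, e x j ≠ 0 := by
    by_contra! h
    exact hx (e.map_eq_zero_iff.mp (funext h))
  let φ (i : ι) : Rˣ →* (K i)ˣ := Units.map ((Pi.evalRingHom K i).comp e.toRingHom).toMonoidHom
  have hφ (u : Rˣ) (i : ι) : (φ i u : K i) = e u i := rfl
  have hinj : Injective fun (u : {u : Rˣ // x * u = y}) (i : {i // i ≠ j}) => φ i u.1 := by
    rintro ⟨u, hu⟩ ⟨u', hu'⟩ h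
    refine Subtype.ext (Units.ext (e.injective (funext fun i => ?_)))
    by_cases hi : i = j
    · subst hi
      refine mul_left_cancel₀ hj ?_
      rw [← Pi.mul_apply, ← Pi.mul_apply, ← map_mul, ← map_mul, hu, hu']
    · simpa [hφ] using congrArg Units.val (congrFun h ⟨i, hi⟩)
  calc Nat.card {u : Rˣ // x * u = y} ≤ Nat.card ((i : {i // i ≠ j}) → (K i)ˣ) :=
        Nat.card_le_card_of_injective _ hinj
    _ = (k - 1) ^ (Fintype.card ι - 1) := by
        rw [Nat.card_pi]
        simp only [Nat.card_units, hk, prod_const, card_univ, ← Nat.card_eq_fintype_card,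
          Nat.card_subtype_ne]

end RingEquivPi

theorem AdjoinRoot.natCard_of_monic {R : Type*} [CommRing R] {g : R[X]} (hg : g.Monic) :
    Nat.card (AdjoinRoot g) = Nat.card R ^ g.natDegree := by
  rw [Nat.card_congr (AdjoinRoot.powerBasis' hg).basis.equivFun.toEquiv, Nat.card_fun,
    Nat.card_fin]
  rfl

theorem Polynomial.pairwise_isCoprime_of_monic_of_irreducible {K ι : Type*} [Field K]
    {f : ι → K[X]} (hinj : Injective f) (hmon : ∀ i, (f i).Monic)
    (hirr : ∀ i, Irreducible (f i)) : Pairwise (IsCoprime on f) := fun i j hij =>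
  (hirr i).coprime_iff_not_dvd.mpr fun hdvd => hij <| hinj <|
    eq_of_monic_of_associated (hmon i) (hmon j) ((hirr i).associated_of_dvd (hirr j) hdvd)

noncomputable def AdjoinRoot.prodRingEquivPi {R ι : Type*} [CommRing R] [Fintype ι]
    {f : ι → R[X]} (hf : Pairwise (IsCoprime on f)) :
    AdjoinRoot (∏ i, f i) ≃+* ∀ i, AdjoinRoot (f i) :=
  (Ideal.quotEquivOfEq (Ideal.iInf_span_singleton fun _ _ hij => hf hij).symm).trans
    (Ideal.quotientInfRingEquivPiQuotient _ fun _ _ hij =>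
      (Ideal.isCoprime_span_singleton_iff _ _).mpr (hf hij))

theorem stmt_9 (q : ℕ) (F : Type) [Field F] [Fintype F]
    (hcard : Fintype.card F = q) (t r m : ℕ) (ht : 2 ≤ t)
    (h : Polynomial F) (hmon : h.Monic)
    (f : Fin r → Polynomial F) (hinj : Function.Injective f)
    (hfmon : ∀ i, (f i).Monic) (hfirr : ∀ i, Irreducible (f i))
    (hfdeg : ∀ i, (f i).natDegree = m) (hfac : h = ∏ i, f i)
    (d : ℕ)
    (hcount : (q ^ m - 1) ^ ((t - 1) * (r - 1)) *
        Nat.card {b : Fin t → AdjoinRoot h // b ≠ 0 ∧ qpcWeight hmon b < d} <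
      (q ^ m - 1) ^ ((t - 1) * r)) :
    ∃ a : Fin t → AdjoinRoot h,
      a ⟨0, by omega⟩ = 1 ∧ (∀ i, i ≠ ⟨0, by omega⟩ → IsUnit (a i)) ∧
      ∀ c ∈ Submodule.span (AdjoinRoot h) {a}, c ≠ 0 → d ≤ qpcWeight hmon c := by
  subst hfac
  have _ (i : Fin r) : Fact (Irreducible (f i)) := ⟨hfirr i⟩
  have _ (i : Fin r) : Module.Finite F (AdjoinRoot (f i)) := (hfmon i).finite_adjoinRoot
  have _ (i : Fin r) : Finite (AdjoinRoot (f i)) := Module.finite_of_finite F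
  let e :=
    AdjoinRoot.prodRingEquivPi (pairwise_isCoprime_of_monic_of_irreducible hinj hfmon hfirr)
  have : Finite (AdjoinRoot (∏ i, f i)) := .of_equiv _ e.symm.toEquiv
  have hk (i : Fin r) : Nat.card (AdjoinRoot (f i)) = q ^ m := by
    rw [AdjoinRoot.natCard_of_monic (hfmon i), Nat.card_eq_fintype_card, hcard, hfdeg]
  have hunits : Nat.card (AdjoinRoot (∏ i, f i))ˣ = (q ^ m - 1) ^ r := by
    rw [card_units_of_ringEquiv_pi e hk, Fintype.card_fin]
  have hsol (x y : AdjoinRoot (∏ i, f i)) (hx : x ≠ 0) :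
      Nat.card {u : (AdjoinRoot (∏ i, f i))ˣ // x * u = y} ≤ (q ^ m - 1) ^ (r - 1) := by
    simpa using card_units_mul_eq_le_of_ringEquiv_pi e hk hx y
  obtain ⟨a, ⟨ha₀, ha⟩, hS⟩ :=
    exists_mem_unitTuples_forall_mem_span_notMem (⟨0, by omega⟩ : Fin t)
    (S := {b | b ≠ 0 ∧ qpcWeight hmon b < d}) (fun h0 => h0.1 rfl) hsol
    (by rwa [hunits, Nat.card_fin, ← pow_mul, ← pow_mul, mul_comm (r - 1), mul_comm r])
  exact ⟨a, ha₀, ha, fun c hc hc0 => not_lt.mp fun hw => hS c hc ⟨hc0, hw⟩⟩
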